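/- arXiv:1007.1431 — 4 statements merged into one kernel-verified Lean document; each statement's English description precedes it below -/
import Mathlib

section
/- For any p ≥ 1, the set A_p = {z ∈ ℝⁿ : Σᵢ min(|zᵢ|, zᵢ²) ≤ p} satisfies (√p·B₂ⁿ) ∪ (p·B₁ⁿ) ⊆ A_p ⊆ √p·B₂ⁿ + p·B₁ⁿ, where B₂ⁿ and B₁ⁿ are the closed unit balls of the Euclidean and ℓ¹ norms on ℝⁿ, and the sum is the Minkowski sum. -/
open Pointwise

theorem stmt5 (n : ℕ) (p : ℝ) (hp : 1 ≤ p) :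
    (Real.sqrt p • {x : Fin n → ℝ | ∑ i, x i ^ 2 ≤ 1} ∪
        p • {x : Fin n → ℝ | ∑ i, |x i| ≤ 1}) ⊆
      {z : Fin n → ℝ | ∑ i, min |z i| (z i ^ 2) ≤ p} ∧
    {z : Fin n → ℝ | ∑ i, min |z i| (z i ^ 2) ≤ p} ⊆
      Real.sqrt p • {x : Fin n → ℝ | ∑ i, x i ^ 2 ≤ 1} +
        p • {x : Fin n → ℝ | ∑ i, |x i| ≤ 1} := by
  have hp0 : (0:ℝ) < p := lt_of_lt_of_le one_pos hp
  have hsp : (0:ℝ) < Real.sqrt p := Real.sqrt_pos.2 hp0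
  constructor
  · rintro z (⟨x, hx, rfl⟩ | ⟨x, hx, rfl⟩)
    · simp only [Set.mem_setOf_eq] at hx ⊢
      calc ∑ i, min |(Real.sqrt p • x) i| ((Real.sqrt p • x) i ^ 2)
          ≤ ∑ i, (Real.sqrt p • x) i ^ 2 :=
            Finset.sum_le_sum fun i _ => min_le_right _ _
        _ = p * ∑ i, x i ^ 2 := by
            simp only [Pi.smul_apply, smul_eq_mul, mul_pow, Real.sq_sqrt hp0.le,
              Finset.mul_sum]
        _ ≤ p * 1 := mul_le_mul_of_nonneg_left hx hp0.le
        _ = p := mul_one p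
    · simp only [Set.mem_setOf_eq] at hx ⊢
      calc ∑ i, min |(p • x) i| ((p • x) i ^ 2)
          ≤ ∑ i, |(p • x) i| := Finset.sum_le_sum fun i _ => min_le_left _ _
        _ = p * ∑ i, |x i| := by
            simp only [Pi.smul_apply, smul_eq_mul, abs_mul, abs_of_pos hp0,
              Finset.mul_sum]
        _ ≤ p * 1 := mul_le_mul_of_nonneg_left hx hp0.le
        _ = p := mul_one p
  · intro z hz
    simp only [Set.mem_setOf_eq] at hz
    set u : Fin n → ℝ := fun i => if |z i| ≤ 1 then z i else 0 with hu_def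
    set v : Fin n → ℝ := fun i => if |z i| ≤ 1 then 0 else z i with hv_def
    have hmin : ∀ i : Fin n, u i ^ 2 + |v i| ≤ min |z i| (z i ^ 2) := by
      intro i
      by_cases h : |z i| ≤ 1
      · simp only [hu_def, hv_def, if_pos h, abs_zero, add_zero]
        refine le_min ?_ ?_
        · nlinarith [sq_abs (z i), abs_nonneg (z i)]
        · rfl
      · push_neg at h
        simp only [hu_def, hv_def, if_neg (not_le.2 h), zero_pow, ne_eq,
          OfNat.ofNat_ne_zero, not_false_eq_true, zero_add]
        refine le_min le_rfl ?_
        nlinarith [sq_abs (z i), abs_nonneg (z i)]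
    have hsum : ∑ i, (u i ^ 2 + |v i|) ≤ p :=
      le_trans (Finset.sum_le_sum fun i _ => hmin i) hz
    rw [Finset.sum_add_distrib] at hsum
    have hu2 : ∑ i, u i ^ 2 ≤ p := by
      have : (0:ℝ) ≤ ∑ i, |v i| := Finset.sum_nonneg fun i _ => abs_nonneg _
      linarith
    have hv1 : ∑ i, |v i| ≤ p := by
      have : (0:ℝ) ≤ ∑ i, u i ^ 2 := Finset.sum_nonneg fun i _ => sq_nonneg _
      linarith
    refine ⟨Real.sqrt p • ((Real.sqrt p)⁻¹ • u),
      Set.smul_mem_smul_set ?_, p • (p⁻¹ • v), Set.smul_mem_smul_set ?_, ?_⟩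
    · simp only [Set.mem_setOf_eq, Pi.smul_apply, smul_eq_mul, mul_pow]
      rw [← Finset.mul_sum]
      rw [inv_pow, Real.sq_sqrt hp0.le]
      rw [inv_mul_le_iff₀ hp0, mul_one]
      exact hu2
    · simp only [Set.mem_setOf_eq, Pi.smul_apply, smul_eq_mul, abs_mul,
        abs_of_pos (inv_pos.2 hp0)]
      rw [← Finset.mul_sum, inv_mul_le_iff₀ hp0, mul_one]
      exact hv1
    · rw [smul_inv_smul₀ hsp.ne', smul_inv_smul₀ hp0.ne']
      funext i
      simp only [Pi.add_apply, hu_def, hv_def]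
      by_cases h : |z i| ≤ 1 <;> simp [h]
end

section
/- Let α > 0, p > 1, d ≥ 1, and let (r_{i₁,...,i_d}) with 1 ≤ i_k ≤ n be nonnegative real numbers. Then p^{αp}·Σ_{𝐢} r_𝐢^p ≤ L_d^p · p^{αd} · [ p^{αp}·max_𝐢 r_𝐢^p + Σ_{I ⊊ {1,...,d}} p^{(#I)p} · max_{𝐢_I} (Σ_{𝐢_{I^c}} r_𝐢)^p ], where L_d is a constant depending only on d, the sum over I is over proper subsets of {1,...,d}, and for a subset I, 𝐢_I = (i_k)_{k∈I}. -/
lemma aux0 (x p : ℝ) (hx : 0 ≤ x) (hp : p ≠ 0) : x ^ (p - 1) * x = x ^ p := by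
  rcases eq_or_lt_of_le hx with h | h
  · rw [← h, mul_zero, Real.zero_rpow hp]
  · rw [← Real.rpow_add_one h.ne' (p - 1)]
    ring_nf

lemma young_aux (p a b : ℝ) (hp : 1 < p) (ha : 0 ≤ a) (hb : 0 ≤ b) :
    a ^ (p - 1) * b ≤ a ^ p + b ^ p := by
  have hp0 : (0:ℝ) < p := by linarith
  rcases le_total a b with h | h
  · have h1 : a ^ (p - 1) * b ≤ b ^ (p - 1) * b :=
      mul_le_mul_of_nonneg_right (Real.rpow_le_rpow ha h (by linarith)) hb
    rw [aux0 b p hb hp0.ne'] at h1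
    linarith [Real.rpow_nonneg ha p]
  · have h1 : a ^ (p - 1) * b ≤ a ^ (p - 1) * a :=
      mul_le_mul_of_nonneg_left h (Real.rpow_nonneg ha _)
    rw [aux0 a p ha hp0.ne'] at h1
    linarith [Real.rpow_nonneg hb p]

open Classical in
theorem stmt7 (d : ℕ) (hd : 1 ≤ d) :
    ∃ L : ℝ, 0 < L ∧
      ∀ (n : ℕ) (hn : 0 < n) (α p : ℝ), 0 < α → 1 < p →
        ∀ r : (Fin d → Fin n) → ℝ, (∀ i, 0 ≤ r i) →
          p ^ (α * p) * ∑ i : Fin d → Fin n, r i ^ p ≤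
            L ^ p * p ^ (α * (d : ℝ)) *
              (p ^ (α * p) *
                  Finset.univ.sup' (Finset.univ_nonempty_iff.mpr ⟨fun _ => ⟨0, hn⟩⟩)
                    (fun i : Fin d → Fin n => r i ^ p) +
                ∑ I ∈ Finset.univ.powerset.filter (· ≠ (Finset.univ : Finset (Fin d))),
                  p ^ ((I.card : ℝ) * p) *
                    Finset.univ.sup' (Finset.univ_nonempty_iff.mpr ⟨fun _ => ⟨0, hn⟩⟩)
                      (fun i : Fin d → Fin n =>
                        (∑ j ∈ Finset.univ.filter
                            (fun j : Fin d → Fin n => ∀ k ∈ I, j k = i k), r j) ^ p)) := by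
  refine ⟨1, one_pos, ?_⟩
  intro n hn α p hα hp r hr
  have hp0 : (0:ℝ) < p := lt_trans one_pos hp
  have hne : (Finset.univ : Finset (Fin d → Fin n)).Nonempty :=
    Finset.univ_nonempty_iff.mpr ⟨fun _ => ⟨0, hn⟩⟩
  set M : ℝ := Finset.univ.sup' hne r with hMdef
  set S : ℝ := ∑ i : Fin d → Fin n, r i with hSdef
  set M' : ℝ := Finset.univ.sup' hne (fun i : Fin d → Fin n => r i ^ p) with hM'def
  set T : ℝ := ∑ I ∈ Finset.univ.powerset.filter (· ≠ (Finset.univ : Finset (Fin d))),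
                  p ^ ((I.card : ℝ) * p) *
                    Finset.univ.sup' hne
                      (fun i : Fin d → Fin n =>
                        (∑ j ∈ Finset.univ.filter
                            (fun j : Fin d → Fin n => ∀ k ∈ I, j k = i k), r j) ^ p) with hTdef
  have hM0 : 0 ≤ M :=
    le_trans (hr (fun _ => ⟨0, hn⟩)) (Finset.le_sup' r (Finset.mem_univ _))
  have hS0 : 0 ≤ S := Finset.sum_nonneg fun i _ => hr i
  -- step 1 : ∑ r^p ≤ M^(p-1) * S
  have key1 : ∑ i : Fin d → Fin n, r i ^ p ≤ M ^ (p-1) * S := by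
    rw [hSdef, Finset.mul_sum]
    apply Finset.sum_le_sum
    intro i _
    have h1 : r i ^ p = r i ^ (p-1) * r i := (aux0 (r i) p (hr i) hp0.ne').symm
    rw [h1]
    apply mul_le_mul_of_nonneg_right _ (hr i)
    exact Real.rpow_le_rpow (hr i) (Finset.le_sup' r (Finset.mem_univ i)) (by linarith)
  -- step 2 : p^(αp) * (M^(p-1)*S) ≤ p^α * (p^(αp)*M^p + S^p)
  have hpa : (0:ℝ) < p ^ α := Real.rpow_pos_of_pos hp0 α
  have hap1 : (p^α*M)^(p-1) = p^(α*(p-1)) * M^(p-1) := by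
    rw [Real.mul_rpow hpa.le hM0, ← Real.rpow_mul hp0.le]
  have hap2 : (p^α*M)^p = p^(α*p) * M^p := by
    rw [Real.mul_rpow hpa.le hM0, ← Real.rpow_mul hp0.le]
  have hsplit : p^(α*p) = p^(α*(p-1)) * p^α := by
    rw [← Real.rpow_add hp0]; ring_nf
  have key2 : p^(α*p) * (M^(p-1)*S) ≤ p^α * (p^(α*p)*M^p + S^p) := by
    have := young_aux p (p^α*M) S hp (mul_nonneg hpa.le hM0) hS0
    rw [hap1, hap2] at this
    calc p^(α*p) * (M^(p-1)*S) = p^α * (p^(α*(p-1)) * M^(p-1) * S) := by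
          rw [hsplit]; ring
      _ ≤ p^α * (p^(α*p)*M^p + S^p) := by
          apply mul_le_mul_of_nonneg_left this hpa.le
  -- step 3 : M^p ≤ M'
  have key3 : M ^ p ≤ M' := by
    obtain ⟨i0, -, hi0⟩ := Finset.exists_mem_eq_sup' hne r
    rw [hMdef, hi0]
    exact Finset.le_sup' (fun i => r i ^ p) (Finset.mem_univ i0)
  -- step 4 : S^p ≤ T
  have key4 : S ^ p ≤ T := by
    have hdne : (∅ : Finset (Fin d)) ≠ Finset.univ := by
      have : (⟨0, hd⟩ : Fin d) ∈ (Finset.univ : Finset (Fin d)) := Finset.mem_univ _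
      intro h; rw [← h] at this; exact Finset.notMem_empty _ this
    have hmem : (∅ : Finset (Fin d)) ∈
        Finset.univ.powerset.filter (· ≠ (Finset.univ : Finset (Fin d))) := by
      simp [Finset.mem_filter, hdne]
    have hval : p ^ (((∅ : Finset (Fin d)).card : ℝ) * p) *
        Finset.univ.sup' hne
          (fun i : Fin d → Fin n =>
            (∑ j ∈ Finset.univ.filter
                (fun j : Fin d → Fin n => ∀ k ∈ (∅ : Finset (Fin d)), j k = i k), r j) ^ p)
        = S ^ p := by
      simp [Finset.filter_true_of_mem, hSdef]
    calc S ^ p = _ := hval.symm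
      _ ≤ T := by
        rw [hTdef]
        apply Finset.single_le_sum (f := fun I => p ^ ((I.card : ℝ) * p) *
          Finset.univ.sup' hne
            (fun i : Fin d → Fin n =>
              (∑ j ∈ Finset.univ.filter
                  (fun j : Fin d → Fin n => ∀ k ∈ I, j k = i k), r j) ^ p)) _ hmem
        intro I _
        apply mul_nonneg (Real.rpow_nonneg hp0.le _)
        have h0 : (0:ℝ) ≤ (∑ j ∈ Finset.univ.filter
            (fun j : Fin d → Fin n => ∀ k ∈ I, j k = (fun _ => (⟨0, hn⟩ : Fin n)) k), r j) ^ p :=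
          Real.rpow_nonneg (Finset.sum_nonneg fun j _ => hr j) p
        exact le_trans h0
          (Finset.le_sup' (fun i : Fin d → Fin n =>
            (∑ j ∈ Finset.univ.filter
                (fun j : Fin d → Fin n => ∀ k ∈ I, j k = i k), r j) ^ p)
            (Finset.mem_univ (fun _ => (⟨0, hn⟩ : Fin n))))
  -- step 5 : p^α ≤ p^(α*d)
  have key5 : p ^ α ≤ p ^ (α * (d:ℝ)) := by
    apply Real.rpow_le_rpow_left_iff hp |>.mpr
    have : (1:ℝ) ≤ (d:ℝ) := by exact_mod_cast hd
    nlinarith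
  -- assemble
  have hPM' : 0 ≤ p^(α*p) * M' + S^p := by
    have h1 : 0 ≤ M' := le_trans (Real.rpow_nonneg (hr _) p)
      (Finset.le_sup' (fun i => r i ^ p) (Finset.mem_univ (fun _ => ⟨0, hn⟩)))
    have h2 : 0 ≤ S^p := Real.rpow_nonneg hS0 p
    have h3 : 0 ≤ p^(α*p) := Real.rpow_nonneg hp0.le _
    exact add_nonneg (mul_nonneg h3 h1) h2
  have hsum : p^(α*p)*M^p + S^p ≤ p^(α*p)*M' + T :=
    add_le_add (mul_le_mul_of_nonneg_left key3 (Real.rpow_nonneg hp0.le _)) key4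
  calc p ^ (α * p) * ∑ i : Fin d → Fin n, r i ^ p
      ≤ p^(α*p) * (M^(p-1)*S) :=
        mul_le_mul_of_nonneg_left key1 (Real.rpow_nonneg hp0.le _)
    _ ≤ p^α * (p^(α*p)*M^p + S^p) := key2
    _ ≤ p^(α*(d:ℝ)) * (p^(α*p)*M' + T) := by
        apply mul_le_mul key5 hsum _ (Real.rpow_nonneg hp0.le _)
        exact add_nonneg (mul_nonneg (Real.rpow_nonneg hp0.le _) (Real.rpow_nonneg hM0 p))
          (Real.rpow_nonneg hS0 p)
    _ = (1:ℝ) ^ p * p^(α*(d:ℝ)) * (p^(α*p)*M' + T) := by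
        rw [Real.one_rpow]; ring
end

section
/- Let A = (a_{ijk})_{1≤i,j,k≤n} be a real array, and for p ≥ 2 define ‖A‖_{{1,2,3},p}^{N} for the exponential case (N(t)=t) as sup{Σ_{ijk} a_{ijk} x_{ijk} : Σᵢ N̂((Σ_{jk} x_{ijk}²)^{1/2}) ≤ p} where N̂(t)=t² for t≤1 and N̂(t)=t for t>1. Then, assuming Σ_{jk} a_{ijk}² is nonincreasing in i, one has ‖A‖_{{1,2,3},p}^{N} ≥ (1/L)·[ Σ_{i ≤ p} (Σ_{jk} a_{ijk}²)^{1/2} + √p·(Σ_{i > p} Σ_{jk} a_{ijk}²)^{1/2} ] for a universal constant L. -/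
/-- `N̂` in the exponential case `N(t) = t`: quadratic below 1, linear above. -/
noncomputable def NhatExp (t : ℝ) : ℝ := if t ≤ 1 then t ^ 2 else t

lemma NhatExp_nonneg {t : ℝ} (ht : 0 ≤ t) : 0 ≤ NhatExp t := by
  unfold NhatExp; split <;> positivity

lemma NhatExp_le_sq {t : ℝ} (ht : 0 ≤ t) : NhatExp t ≤ t ^ 2 := by
  unfold NhatExp; split
  · exact le_refl _
  · nlinarith

lemma NhatExp_zero : NhatExp 0 = 0 := by norm_num [NhatExp]

lemma NhatExp_one : NhatExp 1 = 1 := by norm_num [NhatExp]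

lemma cs {ι : Type*} [Fintype ι] (f g : ι → ℝ) :
    ∑ i, f i * g i ≤ Real.sqrt (∑ i, f i ^ 2) * Real.sqrt (∑ i, g i ^ 2) := by
  have h := Finset.sum_mul_sq_le_sq_mul_sq Finset.univ f g
  calc ∑ i, f i * g i ≤ |∑ i, f i * g i| := le_abs_self _
    _ = Real.sqrt ((∑ i, f i * g i) ^ 2) := (Real.sqrt_sq_eq_abs _).symm
    _ ≤ Real.sqrt ((∑ i, f i ^ 2) * ∑ i, g i ^ 2) := Real.sqrt_le_sqrt h
    _ = _ := Real.sqrt_mul (by positivity) _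

lemma cs2 {n : ℕ} (f g : Fin n → Fin n → ℝ) :
    ∑ j, ∑ k, f j k * g j k ≤
      Real.sqrt (∑ j, ∑ k, f j k ^ 2) * Real.sqrt (∑ j, ∑ k, g j k ^ 2) := by
  have h := cs (ι := Fin n × Fin n) (fun q => f q.1 q.2) (fun q => g q.1 q.2)
  simpa [Fintype.sum_prod_type] using h

set_option maxHeartbeats 1000000 in
open Classical in
theorem stmt14 :
    ∃ L : ℝ, 0 < L ∧
      ∀ (n : ℕ) (a : Fin n → Fin n → Fin n → ℝ) (p : ℝ), 2 ≤ p →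
        (∀ i i' : Fin n, i ≤ i' → ∑ j, ∑ k, a i' j k ^ 2 ≤ ∑ j, ∑ k, a i j k ^ 2) →
        (1 / L) * ((∑ i ∈ Finset.univ.filter (fun i : Fin n => ((i : ℕ) : ℝ) + 1 ≤ p),
              Real.sqrt (∑ j, ∑ k, a i j k ^ 2)) +
            Real.sqrt p *
              Real.sqrt (∑ i ∈ Finset.univ.filter (fun i : Fin n => p < ((i : ℕ) : ℝ) + 1),
                ∑ j, ∑ k, a i j k ^ 2)) ≤
          sSup {s : ℝ | ∃ x : Fin n → Fin n → Fin n → ℝ,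
            (∑ i, NhatExp (Real.sqrt (∑ j, ∑ k, x i j k ^ 2))) ≤ p ∧
            s = ∑ i, ∑ j, ∑ k, a i j k * x i j k} := by
  refine ⟨2, by norm_num, ?_⟩
  intro n a p hp _hmono
  have hp0 : (0:ℝ) < p := by linarith
  set S : Fin n → ℝ := fun i => ∑ j, ∑ k, a i j k ^ 2 with hS
  have hSnn : ∀ i, 0 ≤ S i := fun i => by positivity
  set b : Fin n → ℝ := fun i => Real.sqrt (S i) with hbdef
  have hbnn : ∀ i, 0 ≤ b i := fun i => Real.sqrt_nonneg _
  have hb2 : ∀ i, b i ^ 2 = S i := fun i => Real.sq_sqrt (hSnn i)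
  set E := {s : ℝ | ∃ x : Fin n → Fin n → Fin n → ℝ,
      (∑ i, NhatExp (Real.sqrt (∑ j, ∑ k, x i j k ^ 2))) ≤ p ∧
      s = ∑ i, ∑ j, ∑ k, a i j k * x i j k} with hE
  -- bounded above
  have hBdd : BddAbove E := by
    refine ⟨p * ∑ i, b i, ?_⟩
    rintro s ⟨x, hx, rfl⟩
    have hr : ∀ i : Fin n, Real.sqrt (∑ j, ∑ k, x i j k ^ 2) ≤ p := by
      intro i
      have h1 : NhatExp (Real.sqrt (∑ j, ∑ k, x i j k ^ 2)) ≤ p := by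
        refine le_trans ?_ hx
        exact Finset.single_le_sum
          (f := fun i => NhatExp (Real.sqrt (∑ j, ∑ k, x i j k ^ 2)))
          (fun i _ => NhatExp_nonneg (Real.sqrt_nonneg _)) (Finset.mem_univ i)
      have h0 : (0:ℝ) ≤ Real.sqrt (∑ j, ∑ k, x i j k ^ 2) := Real.sqrt_nonneg _
      unfold NhatExp at h1
      split at h1
      · linarith
      · exact h1
    calc ∑ i, ∑ j, ∑ k, a i j k * x i j k
        ≤ ∑ i, b i * Real.sqrt (∑ j, ∑ k, x i j k ^ 2) :=
          Finset.sum_le_sum fun i _ => cs2 (a i) (x i)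
      _ ≤ ∑ i, b i * p :=
          Finset.sum_le_sum fun i _ =>
            mul_le_mul_of_nonneg_left (hr i) (hbnn i)
      _ = p * ∑ i, b i := by rw [← Finset.sum_mul, mul_comm]
  -- first test element
  set P := Finset.univ.filter (fun i : Fin n => ((i : ℕ) : ℝ) + 1 ≤ p) with hP
  set A := ∑ i ∈ P, b i with hA
  have hAnn : 0 ≤ A := Finset.sum_nonneg fun i _ => hbnn i
  have hcard : (P.card : ℝ) ≤ p := by
    have h1 : P.card ≤ Nat.floor p := by
      have : ∀ i ∈ P, (i : ℕ) ∈ Finset.range (Nat.floor p) := by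
        intro i hi
        rw [hP, Finset.mem_filter] at hi
        rw [Finset.mem_range]
        have : ((i : ℕ) + 1 : ℕ) ≤ Nat.floor p := by
          apply Nat.le_floor
          push_cast
          exact hi.2
        omega
      calc P.card = (P.image (fun i : Fin n => (i : ℕ))).card := by
            rw [Finset.card_image_of_injective _ Fin.val_injective]
        _ ≤ (Finset.range (Nat.floor p)).card := by
            apply Finset.card_le_card
            intro m hm
            rw [Finset.mem_image] at hm
            obtain ⟨i, hi, rfl⟩ := hm
            exact this i hi
        _ = Nat.floor p := Finset.card_range _
    calc (P.card : ℝ) ≤ (Nat.floor p : ℝ) := by exact_mod_cast h1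
      _ ≤ p := Nat.floor_le (le_of_lt hp0)
  have hAmem : A ∈ E := by
    refine ⟨fun i j k => if ((i : ℕ) : ℝ) + 1 ≤ p ∧ b i ≠ 0 then a i j k / b i else 0,
      ?_, ?_⟩
    · have key : ∀ i : Fin n,
          NhatExp (Real.sqrt (∑ j, ∑ k,
            (if ((i : ℕ) : ℝ) + 1 ≤ p ∧ b i ≠ 0 then a i j k / b i else 0) ^ 2))
          = if ((i : ℕ) : ℝ) + 1 ≤ p ∧ b i ≠ 0 then 1 else 0 := by
        intro i
        by_cases h : ((i : ℕ) : ℝ) + 1 ≤ p ∧ b i ≠ 0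
        · have hsum : (∑ j, ∑ k, (a i j k / b i) ^ 2) = 1 := by
            have : (∑ j, ∑ k, (a i j k / b i) ^ 2) = S i / b i ^ 2 := by
              simp [div_pow, ← Finset.sum_div, hS]
            have hS0 : S i ≠ 0 := fun h0 => h.2 (by rw [hbdef]; simp [h0])
            rw [this, hb2, div_self hS0]
          simp [h, hsum, NhatExp_one]
        · simp [h, NhatExp_zero]
      rw [Finset.sum_congr rfl fun i _ => key i]
      calc (∑ i : Fin n, if ((i : ℕ) : ℝ) + 1 ≤ p ∧ b i ≠ 0 then (1:ℝ) else 0)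
          ≤ ∑ i : Fin n, if ((i : ℕ) : ℝ) + 1 ≤ p then (1:ℝ) else 0 := by
            apply Finset.sum_le_sum
            intro i _
            by_cases h1 : ((i : ℕ) : ℝ) + 1 ≤ p <;> by_cases h2 : b i ≠ 0 <;>
              simp [h1, h2]
        _ = (P.card : ℝ) := by
            rw [hP, ← Finset.sum_filter, Finset.sum_const, nsmul_eq_mul, mul_one]
        _ ≤ p := hcard
    · have key : ∀ i : Fin n,
          (∑ j, ∑ k, a i j k *
            (if ((i : ℕ) : ℝ) + 1 ≤ p ∧ b i ≠ 0 then a i j k / b i else 0))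
          = if ((i : ℕ) : ℝ) + 1 ≤ p then b i else 0 := by
        intro i
        by_cases h : ((i : ℕ) : ℝ) + 1 ≤ p ∧ b i ≠ 0
        · have hstep : (∑ j, ∑ k, a i j k * (a i j k / b i)) = S i / b i := by
            calc ∑ j, ∑ k, a i j k * (a i j k / b i)
                = ∑ j, (∑ k, a i j k ^ 2) / b i := by
                  refine Finset.sum_congr rfl fun j _ => ?_
                  rw [Finset.sum_div]
                  exact Finset.sum_congr rfl fun k _ => by ring
              _ = S i / b i := by rw [← Finset.sum_div, hS]
          have e1 : (∑ j, ∑ k, a i j k *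
              (if ((i : ℕ) : ℝ) + 1 ≤ p ∧ b i ≠ 0 then a i j k / b i else 0))
              = ∑ j, ∑ k, a i j k * (a i j k / b i) := by
            simp only [if_pos h]
          rw [e1, hstep, if_pos h.1, ← hb2 i, sq, mul_div_assoc,
            div_self h.2, mul_one]
        · rcases not_and_or.mp h with h1 | h2
          · simp [h, h1]
          · have hb0 : b i = 0 := not_not.mp h2
            simp [h, hb0]
      rw [Finset.sum_congr rfl fun i _ => key i, hA, hP]
      simp [Finset.sum_ite_mem, Finset.sum_filter]
  have hAle : A ≤ sSup E := le_csSup hBdd hAmem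
  -- second test element
  set Q := Finset.univ.filter (fun i : Fin n => p < ((i : ℕ) : ℝ) + 1) with hQ
  set T := ∑ i ∈ Q, S i with hT
  have hTnn : 0 ≤ T := Finset.sum_nonneg fun i _ => hSnn i
  have hBle : Real.sqrt p * Real.sqrt T ≤ sSup E := by
    rcases eq_or_lt_of_le hTnn with hT0 | hTpos
    · rw [← hT0, Real.sqrt_zero, mul_zero]
      exact le_trans hAnn hAle
    · obtain ⟨c, hcnn, hc2, hcT⟩ :
          ∃ c : ℝ, 0 ≤ c ∧ c ^ 2 * T = p ∧ c * T = Real.sqrt p * Real.sqrt T := by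
        refine ⟨Real.sqrt p / Real.sqrt T,
          div_nonneg (Real.sqrt_nonneg _) (Real.sqrt_nonneg _), ?_, ?_⟩
        · rw [div_pow, Real.sq_sqrt (le_of_lt hp0), Real.sq_sqrt hTnn,
            div_mul_cancel₀ _ (ne_of_gt hTpos)]
        · rw [div_mul_eq_mul_div, mul_comm, ← div_mul_eq_mul_div, Real.div_sqrt,
            mul_comm]
      have hmem : Real.sqrt p * Real.sqrt T ∈ E := by
        refine ⟨fun i j k => if p < ((i : ℕ) : ℝ) + 1 then c * a i j k else 0, ?_, ?_⟩
        · have key : ∀ i : Fin n,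
              NhatExp (Real.sqrt (∑ j, ∑ k,
                (if p < ((i : ℕ) : ℝ) + 1 then c * a i j k else 0) ^ 2))
              ≤ if p < ((i : ℕ) : ℝ) + 1 then c ^ 2 * S i else 0 := by
            intro i
            by_cases h : p < ((i : ℕ) : ℝ) + 1
            · have hsum : (∑ j, ∑ k, (c * a i j k) ^ 2) = c ^ 2 * S i := by
                simp [mul_pow, ← Finset.mul_sum, hS]
              rw [if_pos h]
              simp only [h, if_true, hsum]
              calc NhatExp (Real.sqrt (c ^ 2 * S i))
                  ≤ Real.sqrt (c ^ 2 * S i) ^ 2 := NhatExp_le_sq (Real.sqrt_nonneg _)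
                _ = c ^ 2 * S i := Real.sq_sqrt (mul_nonneg (sq_nonneg c) (hSnn i))
            · simp [h, NhatExp_zero]
          calc ∑ i : Fin n, NhatExp (Real.sqrt (∑ j, ∑ k,
                (if p < ((i : ℕ) : ℝ) + 1 then c * a i j k else 0) ^ 2))
              ≤ ∑ i : Fin n, if p < ((i : ℕ) : ℝ) + 1 then c ^ 2 * S i else 0 :=
                Finset.sum_le_sum fun i _ => key i
            _ = c ^ 2 * T := by
                rw [hT, hQ, Finset.sum_filter, Finset.mul_sum]
                exact Finset.sum_congr rfl fun i _ => by
                  by_cases h : p < ((i : ℕ) : ℝ) + 1 <;> simp [h]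
            _ = p := hc2
        · have key : ∀ i : Fin n,
              (∑ j, ∑ k, a i j k *
                (if p < ((i : ℕ) : ℝ) + 1 then c * a i j k else 0))
              = if p < ((i : ℕ) : ℝ) + 1 then c * S i else 0 := by
            intro i
            by_cases h : p < ((i : ℕ) : ℝ) + 1
            · simp only [h, if_true]
              rw [hS]
              rw [Finset.mul_sum]
              refine Finset.sum_congr rfl fun j _ => ?_
              rw [Finset.mul_sum]
              exact Finset.sum_congr rfl fun k _ => by ring
            · simp [h]
          rw [Finset.sum_congr rfl fun i _ => key i]
          have : (∑ i : Fin n, if p < ((i : ℕ) : ℝ) + 1 then c * S i else 0)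
              = c * T := by
            rw [hT, hQ, Finset.sum_filter, Finset.mul_sum]
            exact Finset.sum_congr rfl fun i _ => by
              by_cases h : p < ((i : ℕ) : ℝ) + 1 <;> simp [h]
          rw [this, hcT]
      exact le_csSup hBdd hmem
  linarith
end

section
/- For every p ≥ 1, the number of subsets I ⊆ {1,...,n} satisfying #I ≤ 3p and, for every integer l ≥ 1, #(I ∩ (2^l p, 2^{l+1} p]) ≤ p/l³, is at most L^p for a universal constant L. (Formally: #{I : I ⊆ (0, 2p] ∪ ⋃_{l≥1}(2^l p, 2^{l+1} p], with the stated cardinality constraints} ≤ L^p.) -/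
open Finset Real

/-- partial sums of `∑ 1/(l+1)^2` are at most 2 -/
lemma stmt17_aux_sum_sq (N : ℕ) :
    ∑ l ∈ Finset.range N, (1:ℝ)/((l:ℝ)+1)^2 ≤ 2 - 2/((N:ℝ)+1) := by
  induction N with
  | zero => norm_num
  | succ N ih =>
    rw [Finset.sum_range_succ]
    have h1 : (0:ℝ) < (N:ℝ)+1 := by positivity
    have h2 : (0:ℝ) < (N:ℝ)+2 := by positivity
    have key : (1:ℝ)/((N:ℝ)+1)^2 ≤ 2/((N:ℝ)+1) - 2/((N:ℝ)+1+1) := by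
      have h2' : (0:ℝ) < (N:ℝ)+1+1 := by positivity
      rw [div_sub_div _ _ (ne_of_gt h1) (ne_of_gt h2'), div_le_div_iff₀ (by positivity) (by positivity)]
      nlinarith
    push_cast
    linarith

/-- sum of binomial coefficients is at most a single shifted one (Vandermonde) -/
lemma stmt17_aux_choose_sum (m s : ℕ) :
    ∑ j ∈ Finset.range (s+1), m.choose j ≤ (m+s).choose s := by
  rw [Nat.add_choose_eq,
    Finset.Nat.sum_antidiagonal_eq_sum_range_succ (fun i j => m.choose i * s.choose j)]
  apply Finset.sum_le_sum
  intro j hj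
  have h : 0 < s.choose (s - j) := Nat.choose_pos (Nat.sub_le _ _)
  calc m.choose j = m.choose j * 1 := (mul_one _).symm
    _ ≤ m.choose j * s.choose (s - j) := Nat.mul_le_mul_left _ h

lemma stmt17_aux_choose_le (N s : ℕ) (hs : 1 ≤ s) :
    (N.choose s : ℝ) ≤ (Real.exp 1 * N / s) ^ s := by
  have hfac : (0:ℝ) < (s.factorial : ℝ) := by exact_mod_cast s.factorial_pos
  have hs0 : (0:ℝ) < (s:ℝ) := by exact_mod_cast hs
  have hss : (0:ℝ) < (s:ℝ)^s := by positivity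
  have h1 : ((s.factorial : ℝ)) * (N.choose s : ℝ) ≤ (N:ℝ)^s := by
    have := Nat.descFactorial_le_pow N s
    have h2 : s.factorial * N.choose s = N.descFactorial s :=
      (Nat.descFactorial_eq_factorial_mul_choose N s).symm
    calc ((s.factorial : ℝ)) * (N.choose s : ℝ) = ((s.factorial * N.choose s : ℕ) : ℝ) := by
          push_cast; ring
      _ = ((N.descFactorial s : ℕ) : ℝ) := by rw [h2]
      _ ≤ (N:ℝ)^s := by exact_mod_cast this
  have h3 : (s:ℝ)^s / (s.factorial : ℝ) ≤ Real.exp s := by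
    refine le_trans ?_ (Real.sum_le_exp_of_nonneg (x := (s:ℝ)) (by positivity) (s+1))
    exact Finset.single_le_sum (f := fun i => (s:ℝ)^i / (i.factorial : ℝ))
      (fun i _ => by positivity) (Finset.self_mem_range_succ s)
  have h4 : (s:ℝ)^s ≤ Real.exp s * (s.factorial : ℝ) := by
    rw [div_le_iff₀ hfac] at h3; exact h3
  have hexp : (Real.exp 1 * N / s : ℝ) ^ s = Real.exp s * (N:ℝ)^s / (s:ℝ)^s := by
    rw [div_pow, mul_pow, ← Real.exp_nat_mul]
    ring_nf
  rw [hexp, le_div_iff₀ hss]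
  have hNc : (0:ℝ) ≤ (N.choose s : ℝ) := by positivity
  nlinarith [Real.exp_pos (s:ℝ), mul_le_mul_of_nonneg_left h1 (Real.exp_pos (s:ℝ)).le]

lemma stmt17_aux_half_le_floor {x : ℝ} (hx : 1 ≤ x) : x/2 ≤ (⌊x⌋₊ : ℝ) := by
  rcases le_or_gt 2 x with h | h
  · have := Nat.sub_one_lt_floor x
    linarith
  · have h1 : (1:ℕ) ≤ ⌊x⌋₊ := Nat.le_floor (by exact_mod_cast hx)
    have : (1:ℝ) ≤ (⌊x⌋₊ : ℝ) := by exact_mod_cast h1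
    linarith

set_option maxHeartbeats 2000000 in
open Classical in
theorem stmt17 :
    ∃ L : ℝ, 1 ≤ L ∧
      ∀ (n : ℕ) (p : ℝ), 1 ≤ p →
        (Nat.card {I : Finset ℕ | I ⊆ Finset.Icc 1 n ∧ ((I.card : ℝ) ≤ 3 * p) ∧
            ∀ l : ℕ, 1 ≤ l →
              (((I.filter (fun i : ℕ => 2 ^ l * p < (i : ℝ) ∧ (i : ℝ) ≤ 2 ^ (l + 1) * p)).card : ℝ)
                ≤ p / (l : ℝ) ^ 3)} : ℝ) ≤ L ^ p := by
  refine ⟨Real.exp 30, Real.one_le_exp (by norm_num), ?_⟩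
  intro n p hp
  have hp0 : (0:ℝ) < p := lt_of_lt_of_le one_pos hp
  set K := ⌊p⌋₊ with hKdef
  set B : ℕ → Finset ℕ := fun l =>
    if l = 0 then Finset.Icc 1 ⌊2*p⌋₊ else Finset.Ioc ⌊2^l*p⌋₊ ⌊2^(l+1)*p⌋₊ with hBdef
  set sb : ℕ → ℕ := fun l => if l = 0 then ⌊2*p⌋₊ else ⌊p/(l:ℝ)^3⌋₊ with hsdef
  set S := {I : Finset ℕ | I ⊆ Finset.Icc 1 n ∧ ((I.card : ℝ) ≤ 3 * p) ∧
      ∀ l : ℕ, 1 ≤ l →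
        (((I.filter (fun i : ℕ => 2 ^ l * p < (i : ℝ) ∧ (i : ℝ) ≤ 2 ^ (l + 1) * p)).card : ℝ)
          ≤ p / (l : ℝ) ^ 3)} with hSdef
  -- the blocks, as filters
  have hBfil : ∀ (I : Finset ℕ) (l : ℕ), 1 ≤ l →
      I ∩ B l = I.filter (fun i : ℕ => 2 ^ l * p < (i : ℝ) ∧ (i : ℝ) ≤ 2 ^ (l + 1) * p) := by
    intro I l hl
    have hl0 : l ≠ 0 := by omega
    ext i
    simp only [hBdef, hl0, if_neg hl0, Finset.mem_inter, Finset.mem_Ioc, Finset.mem_filter]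
    constructor
    · rintro ⟨hI, h1, h2⟩
      refine ⟨hI, ?_, ?_⟩
      · exact (Nat.floor_lt (by positivity)).mp h1
      · exact (Nat.le_floor_iff (by positivity)).mp h2
    · rintro ⟨hI, h1, h2⟩
      exact ⟨hI, (Nat.floor_lt (by positivity)).mpr h1, Nat.le_floor h2⟩
  -- card bounds for intersections
  have hcardB : ∀ I ∈ S, ∀ l : ℕ, (I ∩ B l).card ≤ sb l := by
    intro I hI l
    rcases Nat.eq_zero_or_pos l with rfl | hl
    · have h1 : (I ∩ B 0).card ≤ (B 0).card := Finset.card_le_card Finset.inter_subset_right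
      have h2 : (B 0).card = ⌊2*p⌋₊ := by
        simp [hBdef, Nat.card_Icc]
      simpa [hsdef, h2] using h1
    · have hl' : 1 ≤ l := hl
      have hfil := hI.2.2 l hl'
      rw [← hBfil I l hl'] at hfil
      have : ((I ∩ B l).card : ℝ) ≤ p / (l:ℝ)^3 := hfil
      have hfl := Nat.le_floor this
      have hl0 : l ≠ 0 := by omega
      simpa [hsdef, hl0] using hfl
  -- covering: every element of I lies in some block with index ≤ K
  have hcover : ∀ I ∈ S, ∀ i ∈ I, ∃ l : ℕ, l ≤ K ∧ i ∈ B l := by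
    intro I hI i hi
    have hi1 : 1 ≤ i := (Finset.mem_Icc.mp (hI.1 hi)).1
    by_cases hc : (i:ℝ) ≤ 2*p
    · refine ⟨0, Nat.zero_le _, ?_⟩
      simp only [hBdef, if_pos rfl, Finset.mem_Icc]
      exact ⟨hi1, Nat.le_floor (by simpa using hc)⟩
    · push_neg at hc
      have hex : ∃ k, (i:ℝ) ≤ 2^k * p := by
        refine ⟨i, ?_⟩
        have h1 : (i:ℝ) ≤ (2:ℝ)^i := by
          have := Nat.lt_two_pow_self (n := i)
          have : (i:ℝ) < ((2^i : ℕ) : ℝ) := by exact_mod_cast this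
          push_cast at this
          linarith
        nlinarith [pow_pos (show (0:ℝ) < 2 by norm_num) i]
      set k := Nat.find hex with hkdef
      have hk := Nat.find_spec hex
      rw [← hkdef] at hk
      have hk0 : k ≠ 0 := by
        intro h
        rw [h] at hk
        norm_num at hk
        nlinarith
      have hk1 : k ≠ 1 := by
        intro h
        rw [h] at hk
        norm_num at hk
        nlinarith
      have hk2 : 2 ≤ k := by omega
      set l := k - 1 with hldef
      have hlk : l + 1 = k := by omega
      have hl1 : 1 ≤ l := by omega
      have hlt : 2^l * p < (i:ℝ) := by
        have := Nat.find_min hex (m := l) (by omega)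
        push_neg at this
        exact this
      have hle : (i:ℝ) ≤ 2^(l+1) * p := by rw [hlk]; exact hk
      have hiB : i ∈ B l := by
        have hl0 : l ≠ 0 := by omega
        simp only [hBdef, if_neg hl0, Finset.mem_Ioc]
        exact ⟨(Nat.floor_lt (by positivity)).mpr hlt, Nat.le_floor hle⟩
      refine ⟨l, ?_, hiB⟩
      by_contra hKl
      push_neg at hKl
      have hpl : p < (l:ℝ) := by
        have h1 : p < (K:ℝ) + 1 := Nat.lt_floor_add_one p
        have h2 : (K:ℝ) + 1 ≤ (l:ℝ) := by exact_mod_cast hKl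
        linarith
      have hl3 : (l:ℝ) ≤ (l:ℝ)^3 := by
        have h1 : (1:ℝ) ≤ (l:ℝ) := by exact_mod_cast hl1
        exact le_self_pow₀ h1 (by norm_num)
      have hfrac : p / (l:ℝ)^3 < 1 := by
        rw [div_lt_one (by positivity)]
        linarith
      have hfil := hI.2.2 l hl1
      have hlt1 : ((I.filter (fun i : ℕ => 2 ^ l * p < (i : ℝ) ∧ (i : ℝ) ≤ 2 ^ (l + 1) * p)).card : ℝ) < 1 :=
        lt_of_le_of_lt hfil hfrac
      have hcard0 : (I.filter (fun i : ℕ => 2 ^ l * p < (i : ℝ) ∧ (i : ℝ) ≤ 2 ^ (l + 1) * p)).card = 0 := by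
        exact_mod_cast Nat.lt_one_iff.mp (by exact_mod_cast hlt1)
      have hmem : i ∈ I.filter (fun i : ℕ => 2 ^ l * p < (i : ℝ) ∧ (i : ℝ) ≤ 2 ^ (l + 1) * p) :=
        Finset.mem_filter.mpr ⟨hi, hlt, hle⟩
      rw [Finset.card_eq_zero.mp hcard0] at hmem
      exact absurd hmem (Finset.notMem_empty i)
  -- the injection into a product of block-subsets
  have hfin : ∀ l : Fin (K+1), Finite {J : Finset ℕ // J ⊆ B l.val ∧ J.card ≤ sb l.val} := by
    intro l
    have : {J : Finset ℕ | J ⊆ B l.val ∧ J.card ≤ sb l.val} ⊆ ↑((B l.val).powerset) := by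
      intro J hJ
      simp only [Finset.coe_powerset, Set.mem_preimage, Set.mem_powerset_iff, Finset.coe_subset]
      exact hJ.1
    exact ((B l.val).powerset.finite_toSet.subset this).to_subtype
  have hinj : Nat.card S ≤ Nat.card (∀ l : Fin (K+1), {J : Finset ℕ // J ⊆ B l.val ∧ J.card ≤ sb l.val}) := by
    apply Nat.card_le_card_of_injective
      (f := fun I : S => fun l : Fin (K+1) =>
        (⟨I.val ∩ B l.val, Finset.inter_subset_right, hcardB I.val I.property l.val⟩ :
          {J : Finset ℕ // J ⊆ B l.val ∧ J.card ≤ sb l.val}))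
    intro I I' h
    apply Subtype.ext
    apply Finset.ext
    intro i
    constructor
    · intro hi
      obtain ⟨l, hlK, hiB⟩ := hcover I.val I.property i hi
      have := congrFun h ⟨l, by omega⟩
      have heq : I.val ∩ B l = I'.val ∩ B l := by
        simpa using congrArg Subtype.val this
      have : i ∈ I.val ∩ B l := Finset.mem_inter.mpr ⟨hi, hiB⟩
      rw [heq] at this
      exact (Finset.mem_inter.mp this).1
    · intro hi
      obtain ⟨l, hlK, hiB⟩ := hcover I'.val I'.property i hi
      have := congrFun h ⟨l, by omega⟩
      have heq : I.val ∩ B l = I'.val ∩ B l := by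
        simpa using congrArg Subtype.val this
      have : i ∈ I'.val ∩ B l := Finset.mem_inter.mpr ⟨hi, hiB⟩
      rw [← heq] at this
      exact (Finset.mem_inter.mp this).1
  have hpi : Nat.card (∀ l : Fin (K+1), {J : Finset ℕ // J ⊆ B l.val ∧ J.card ≤ sb l.val})
      = ∏ l : Fin (K+1), Nat.card {J : Finset ℕ // J ⊆ B l.val ∧ J.card ≤ sb l.val} :=
    Nat.card_pi
  -- per-block bound
  have hblock : ∀ l : ℕ, Nat.card {J : Finset ℕ // J ⊆ B l ∧ J.card ≤ sb l}
      ≤ ((B l).card + sb l).choose (sb l) := by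
    intro l
    have h1 : {J : Finset ℕ | J ⊆ B l ∧ J.card ≤ sb l}
        = ↑(((B l).powerset).filter (fun J => J.card ≤ sb l)) := by
      ext J
      simp [Finset.mem_powerset]
    have h2 : Nat.card {J : Finset ℕ // J ⊆ B l ∧ J.card ≤ sb l}
        = (((B l).powerset).filter (fun J => J.card ≤ sb l)).card := by
      rw [show {J : Finset ℕ // J ⊆ B l ∧ J.card ≤ sb l}
          = ↥{J : Finset ℕ | J ⊆ B l ∧ J.card ≤ sb l} from rfl,
        Nat.card_coe_set_eq, h1, Set.ncard_coe_finset]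
    rw [h2]
    have h3 : ((B l).powerset).filter (fun J => J.card ≤ sb l)
        ⊆ (Finset.range (sb l + 1)).biUnion (fun j => (B l).powersetCard j) := by
      intro J hJ
      rw [Finset.mem_filter, Finset.mem_powerset] at hJ
      rw [Finset.mem_biUnion]
      exact ⟨J.card, Finset.mem_range.mpr (by omega), Finset.mem_powersetCard.mpr ⟨hJ.1, rfl⟩⟩
    calc (((B l).powerset).filter (fun J => J.card ≤ sb l)).card
        ≤ ((Finset.range (sb l + 1)).biUnion (fun j => (B l).powersetCard j)).card :=
          Finset.card_le_card h3
      _ ≤ ∑ j ∈ Finset.range (sb l + 1), ((B l).powersetCard j).card := Finset.card_biUnion_le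
      _ = ∑ j ∈ Finset.range (sb l + 1), (B l).card.choose j := by
          simp [Finset.card_powersetCard]
      _ ≤ ((B l).card + sb l).choose (sb l) := stmt17_aux_choose_sum _ _
  -- now work in ℝ
  have hchain : (Nat.card S : ℝ) ≤ ∏ l ∈ Finset.range (K+1), ((((B l).card + sb l).choose (sb l) : ℕ) : ℝ) := by
    have h1 : Nat.card S ≤ ∏ l : Fin (K+1), ((B l.val).card + sb l.val).choose (sb l.val) := by
      refine hinj.trans ?_
      rw [hpi]
      exact Finset.prod_le_prod' (fun l _ => hblock l.val)
    have h2 : ∏ l : Fin (K+1), ((B l.val).card + sb l.val).choose (sb l.val)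
        = ∏ l ∈ Finset.range (K+1), ((B l).card + sb l).choose (sb l) :=
      Fin.prod_univ_eq_prod_range (fun l => ((B l).card + sb l).choose (sb l)) (K+1)
    calc (Nat.card S : ℝ) ≤ ((∏ l : Fin (K+1), ((B l.val).card + sb l.val).choose (sb l.val) : ℕ) : ℝ) := by
          exact_mod_cast h1
      _ = ∏ l ∈ Finset.range (K+1), ((((B l).card + sb l).choose (sb l) : ℕ) : ℝ) := by
          rw [h2]; push_cast; rfl
  -- bound the l = 0 factor
  have hzero : ((((B 0).card + sb 0).choose (sb 0) : ℕ) : ℝ) ≤ Real.exp (4*p) := by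
    have hm : (B 0).card = ⌊2*p⌋₊ := by simp [hBdef, Nat.card_Icc]
    have hs0 : sb 0 = ⌊2*p⌋₊ := by simp [hsdef]
    set m := ⌊2*p⌋₊ with hmdef
    have h1 : ((B 0).card + sb 0).choose (sb 0) ≤ 2^(m + m) := by
      rw [hm, hs0]
      calc (m + m).choose m ≤ ∑ j ∈ Finset.range (m + m + 1), (m+m).choose j :=
            Finset.single_le_sum (fun j _ => Nat.zero_le _)
              (Finset.mem_range.mpr (by omega))
        _ = 2^(m+m) := Nat.sum_range_choose (m+m)
    have h2 : ((2:ℝ))^(m+m) ≤ Real.exp (4*p) := by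
      have h3 : ((2:ℝ))^(m+m) ≤ (Real.exp 1)^(m+m) :=
        pow_le_pow_left₀ (by norm_num) (by
          have := Real.add_one_le_exp (1:ℝ); linarith) _
      have h4 : (Real.exp 1)^(m+m) = Real.exp ((m+m : ℕ) : ℝ) := by
        rw [← Real.exp_nat_mul]; ring_nf
      have h5 : ((m+m : ℕ) : ℝ) ≤ 4*p := by
        have : (m:ℝ) ≤ 2*p := Nat.floor_le (by positivity)
        push_cast
        linarith
      calc ((2:ℝ))^(m+m) ≤ (Real.exp 1)^(m+m) := h3
        _ = Real.exp ((m+m : ℕ) : ℝ) := h4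
        _ ≤ Real.exp (4*p) := Real.exp_le_exp.mpr h5
    calc ((((B 0).card + sb 0).choose (sb 0) : ℕ) : ℝ) ≤ ((2^(m+m) : ℕ) : ℝ) := by exact_mod_cast h1
      _ = ((2:ℝ))^(m+m) := by push_cast; rfl
      _ ≤ Real.exp (4*p) := h2
  -- bound the l ≥ 1 factors
  have hpos : ∀ l : ℕ, 1 ≤ l →
      ((((B l).card + sb l).choose (sb l) : ℕ) : ℝ) ≤ Real.exp (8*p/((l:ℝ)^2)) := by
    intro l hl
    have hl0 : l ≠ 0 := by omega
    have hlR : (1:ℝ) ≤ (l:ℝ) := by exact_mod_cast hl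
    have hsl : sb l = ⌊p/(l:ℝ)^3⌋₊ := by simp [hsdef, hl0]
    rcases Nat.eq_zero_or_pos (sb l) with h0 | hpos1
    · rw [h0]
      simp only [Nat.choose_zero_right, Nat.cast_one]
      exact Real.one_le_exp (by positivity)
    · -- s ≥ 1
      have hs1 : 1 ≤ sb l := hpos1
      have hsR : (0:ℝ) < ((sb l : ℕ) : ℝ) := by exact_mod_cast hs1
      have hx1 : (1:ℝ) ≤ p/(l:ℝ)^3 := by
        by_contra hcon
        push_neg at hcon
        have : ⌊p/(l:ℝ)^3⌋₊ = 0 := Nat.floor_eq_zero.mpr hcon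
        omega
      have hsle : ((sb l : ℕ) : ℝ) ≤ p/(l:ℝ)^3 := by
        rw [hsl]; exact Nat.floor_le (by positivity)
      have hsge : p/(l:ℝ)^3/2 ≤ ((sb l : ℕ) : ℝ) := by
        rw [hsl]
        have := stmt17_aux_half_le_floor hx1
        linarith
      have hmle : ((B l).card : ℝ) ≤ 2^(l+1)*p := by
        have h1 : (B l).card = ⌊2^(l+1)*p⌋₊ - ⌊2^l*p⌋₊ := by
          simp [hBdef, hl0, Nat.card_Ioc]
        have h2 : ((⌊2^(l+1)*p⌋₊ : ℕ) : ℝ) ≤ 2^(l+1)*p := Nat.floor_le (by positivity)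
        have h3 : (B l).card ≤ ⌊2^(l+1)*p⌋₊ := by omega
        calc ((B l).card : ℝ) ≤ ((⌊2^(l+1)*p⌋₊ : ℕ) : ℝ) := by exact_mod_cast h3
          _ ≤ 2^(l+1)*p := h2
      -- main estimate : exp 1 * (m+s)/s ≤ exp (8 l)
      have hbase : Real.exp 1 * (((B l).card : ℝ) + ((sb l : ℕ) : ℝ)) / ((sb l : ℕ) : ℝ)
          ≤ Real.exp (8*(l:ℝ)) := by
        have hms : ((B l).card : ℝ) + ((sb l : ℕ) : ℝ) ≤ 2^(l+2)*p := by
          have h1 : ((sb l : ℕ) : ℝ) ≤ p := by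
            have hl31 : (1:ℝ) ≤ (l:ℝ)^3 := one_le_pow₀ hlR
            have : p/(l:ℝ)^3 ≤ p := by
              rw [div_le_iff₀ (by positivity)]
              nlinarith [mul_le_mul_of_nonneg_left hl31 (le_of_lt hp0)]
            linarith
          have h2 : (2:ℝ)^(l+1)*p + p ≤ 2^(l+2)*p := by
            have h3 : (1:ℝ) ≤ (2:ℝ)^(l+1) := one_le_pow₀ (by norm_num)
            have : (2:ℝ)^(l+2) = 2 * 2^(l+1) := by ring
            nlinarith
          linarith
        have hden : p/(l:ℝ)^3/2 > 0 := by positivity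
        have hdiv : (((B l).card : ℝ) + ((sb l : ℕ) : ℝ)) / ((sb l : ℕ) : ℝ)
            ≤ (2^(l+2)*p) / (p/(l:ℝ)^3/2) := by
          apply div_le_div₀ (by positivity) hms hden hsge
        have heq : (2^(l+2)*p) / (p/(l:ℝ)^3/2) = 2^(l+3)*(l:ℝ)^3 := by
          rw [div_eq_iff (by positivity)]
          field_simp
          ring
        rw [heq] at hdiv
        have hfinal : Real.exp 1 * (2^(l+3)*(l:ℝ)^3) ≤ Real.exp (8*(l:ℝ)) := by
          have e1 : (2:ℝ)^(l+3) ≤ Real.exp ((l:ℝ)+3) := by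
            have h2e : (2:ℝ) ≤ Real.exp 1 := by
              have := Real.add_one_le_exp (1:ℝ); linarith
            calc (2:ℝ)^(l+3) ≤ (Real.exp 1)^(l+3) := pow_le_pow_left₀ (by norm_num) h2e _
              _ = Real.exp ((l+3 : ℕ) : ℝ) := by rw [← Real.exp_nat_mul]; ring_nf
              _ = Real.exp ((l:ℝ)+3) := by push_cast; ring_nf
          have e2 : (l:ℝ)^3 ≤ Real.exp (3*((l:ℝ)-1)) := by
            have h1 : (l:ℝ) ≤ Real.exp ((l:ℝ)-1) := by
              have := Real.add_one_le_exp ((l:ℝ)-1); linarith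
            calc (l:ℝ)^3 ≤ (Real.exp ((l:ℝ)-1))^3 := by
                  apply pow_le_pow_left₀ (by linarith) h1
              _ = Real.exp (3*((l:ℝ)-1)) := by
                  rw [← Real.exp_nat_mul]; norm_num
          have hprod : Real.exp 1 * (2^(l+3)*(l:ℝ)^3)
              ≤ Real.exp 1 * (Real.exp ((l:ℝ)+3) * Real.exp (3*((l:ℝ)-1))) := by
            have hl3 : (0:ℝ) ≤ (l:ℝ)^3 := by positivity
            have := mul_le_mul e1 e2 hl3 (Real.exp_pos ((l:ℝ)+3)).le
            nlinarith [Real.exp_pos (1:ℝ)]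
          calc Real.exp 1 * (2^(l+3)*(l:ℝ)^3)
              ≤ Real.exp 1 * (Real.exp ((l:ℝ)+3) * Real.exp (3*((l:ℝ)-1))) := hprod
            _ = Real.exp (1 + (((l:ℝ)+3) + 3*((l:ℝ)-1))) := by
                rw [← Real.exp_add, ← Real.exp_add]
            _ ≤ Real.exp (8*(l:ℝ)) := Real.exp_le_exp.mpr (by nlinarith)
        calc Real.exp 1 * (((B l).card : ℝ) + ((sb l : ℕ) : ℝ)) / ((sb l : ℕ) : ℝ)
            = Real.exp 1 * ((((B l).card : ℝ) + ((sb l : ℕ) : ℝ)) / ((sb l : ℕ) : ℝ)) := by ring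
          _ ≤ Real.exp 1 * (2^(l+3)*(l:ℝ)^3) := by
              have := mul_le_mul_of_nonneg_left hdiv (Real.exp_pos 1).le
              linarith
          _ ≤ Real.exp (8*(l:ℝ)) := hfinal
      have hchoose := stmt17_aux_choose_le ((B l).card + sb l) (sb l) hs1
      have hb : (Real.exp 1 * (((B l).card + sb l : ℕ) : ℝ) / ((sb l : ℕ) : ℝ))
          ≤ Real.exp (8*(l:ℝ)) := by
        push_cast
        push_cast at hbase
        exact hbase
      have hb0 : (0:ℝ) ≤ Real.exp 1 * (((B l).card + sb l : ℕ) : ℝ) / ((sb l : ℕ) : ℝ) := by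
        exact div_nonneg (mul_nonneg (Real.exp_pos 1).le (Nat.cast_nonneg _)) (Nat.cast_nonneg _)
      have hpow : (Real.exp 1 * (((B l).card + sb l : ℕ) : ℝ) / ((sb l : ℕ) : ℝ)) ^ (sb l)
          ≤ Real.exp (8*p/((l:ℝ)^2)) := by
        calc (Real.exp 1 * (((B l).card + sb l : ℕ) : ℝ) / ((sb l : ℕ) : ℝ)) ^ (sb l)
            ≤ (Real.exp (8*(l:ℝ))) ^ (sb l) := pow_le_pow_left₀ hb0 hb (sb l)
          _ = Real.exp (((sb l : ℕ) : ℝ) * (8*(l:ℝ))) := by rw [← Real.exp_nat_mul]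
          _ ≤ Real.exp (8*p/((l:ℝ)^2)) := by
              apply Real.exp_le_exp.mpr
              have h1 : ((sb l : ℕ) : ℝ) * (8*(l:ℝ)) ≤ (p/(l:ℝ)^3) * (8*(l:ℝ)) := by
                apply mul_le_mul_of_nonneg_right hsle
                positivity
              have h2 : (p/(l:ℝ)^3) * (8*(l:ℝ)) = 8*p/((l:ℝ)^2) := by
                field_simp
              rw [h2] at h1
              exact h1
      calc ((((B l).card + sb l).choose (sb l) : ℕ) : ℝ)
          ≤ (Real.exp 1 * (((B l).card + sb l : ℕ) : ℝ) / ((sb l : ℕ) : ℝ)) ^ (sb l) := hchoose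
        _ ≤ Real.exp (8*p/((l:ℝ)^2)) := hpow
  -- put it together
  have hsplit : ∏ l ∈ Finset.range (K+1), ((((B l).card + sb l).choose (sb l) : ℕ) : ℝ)
      = (∏ i ∈ Finset.range K, ((((B (i+1)).card + sb (i+1)).choose (sb (i+1)) : ℕ) : ℝ))
        * ((((B 0).card + sb 0).choose (sb 0) : ℕ) : ℝ) :=
    Finset.prod_range_succ' (fun l => ((((B l).card + sb l).choose (sb l) : ℕ) : ℝ)) K
  have htail : ∏ i ∈ Finset.range K, ((((B (i+1)).card + sb (i+1)).choose (sb (i+1)) : ℕ) : ℝ)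
      ≤ Real.exp (16*p) := by
    calc ∏ i ∈ Finset.range K, ((((B (i+1)).card + sb (i+1)).choose (sb (i+1)) : ℕ) : ℝ)
        ≤ ∏ i ∈ Finset.range K, Real.exp (8*p/(((i:ℝ)+1)^2)) := by
          apply Finset.prod_le_prod (fun i _ => by positivity)
          intro i _
          have := hpos (i+1) (by omega)
          push_cast at this ⊢
          convert this using 3
      _ = Real.exp (∑ i ∈ Finset.range K, 8*p/(((i:ℝ)+1)^2)) := (Real.exp_sum _ _).symm
      _ ≤ Real.exp (16*p) := by
          apply Real.exp_le_exp.mpr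
          have h1 : ∑ i ∈ Finset.range K, 8*p/(((i:ℝ)+1)^2)
              = 8*p * ∑ i ∈ Finset.range K, (1:ℝ)/(((i:ℝ)+1)^2) := by
            rw [Finset.mul_sum]
            apply Finset.sum_congr rfl
            intro i _
            ring
          rw [h1]
          have h2 : ∑ i ∈ Finset.range K, (1:ℝ)/(((i:ℝ)+1)^2) ≤ 2 := by
            have := stmt17_aux_sum_sq K
            have h3 : (0:ℝ) ≤ 2/((K:ℝ)+1) := by positivity
            linarith
          nlinarith
  calc (Nat.card S : ℝ)
      ≤ ∏ l ∈ Finset.range (K+1), ((((B l).card + sb l).choose (sb l) : ℕ) : ℝ) := hchain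
    _ = (∏ i ∈ Finset.range K, ((((B (i+1)).card + sb (i+1)).choose (sb (i+1)) : ℕ) : ℝ))
        * ((((B 0).card + sb 0).choose (sb 0) : ℕ) : ℝ) := hsplit
    _ ≤ Real.exp (16*p) * Real.exp (4*p) := by
        apply mul_le_mul htail hzero (by positivity) (by positivity)
    _ = Real.exp (20*p) := by rw [← Real.exp_add]; ring_nf
    _ ≤ Real.exp (30*p) := Real.exp_le_exp.mpr (by nlinarith)
    _ = Real.exp 30 ^ p := by rw [← Real.exp_mul]
end
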